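/- Let 0 < ε ≤ 1/4. Consider the financial system on banks {1,…,6} with external assets e 1 = e 4 = 1 and e i = 0 otherwise; a CDS of notional 1 with debtor 1, creditor 2, reference bank 5; a debt contract 2→3 of notional 1/2; a CDS of notional 1 with debtor 4, creditor 5, reference bank 2; and a debt contract 5→6 of notional 4ε (all other notionals 0). Define the clearing map F : [0,1]^6 → [0,1]^6 coordinate-wise by F i (x) = min 1 (a i x / L i x) if L i x > 0 and F i (x) = 1 if L i x = 0. Then: (i) r = (1, 1, 1, 1, 0, 1) is a clearing vector, i.e. F r = r; (ii) the vector r′ = (1, 1 − 2ε, 1, 1, 1/2 + ε, 1) satisfies ‖F r′ − r′‖_∞ ≤ ε; and (iii) ‖r′ − r‖_∞ = 1/2 + ε > 1/2. Thus r′ is a weak ε-approximate fixed point of F whose ℓ∞-distance to the clearing vector r exceeds 1/2. -/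

import Mathlib

/-!
On nonnegative vectors the clearing map of this system reduces to
`F₂ x = min 1 (2 x₁ (1 - x₅))`, `F₅ x = min 1 (x₄ (1 - x₂) / (4ε))` and `Fᵢ x = 1` for the
four solvent banks. Bank 5's recovery depends on bank 2's with slope `1/(4ε)`, so moving
`r₂` by `2ε` moves `F₅` by `1/2`: this lets `r'` be nearly fixed while `r'₅ - r₅ = 1/2 + ε`.
-/

open Finset

/-- The liability of bank `i` to bank `j` under recovery-rate vector `r`. -/
def liab {n : ℕ} (c : Fin n → Fin n → ℝ) (cds : Fin n → Fin n → Fin n → ℝ)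
    (r : Fin n → ℝ) (i j : Fin n) : ℝ :=
  c i j + ∑ R : Fin n, (1 - r R) * cds i j R

/-- The total liability of bank `i` under recovery-rate vector `r`. -/
def totLiab {n : ℕ} (c : Fin n → Fin n → ℝ) (cds : Fin n → Fin n → Fin n → ℝ)
    (r : Fin n → ℝ) (i : Fin n) : ℝ :=
  ∑ j : Fin n, liab c cds r i j

/-- The assets of bank `i` under recovery-rate vector `r`
(external assets plus incoming payments `p j i r = r j * liab c cds r j i`). -/
def assets {n : ℕ} (e : Fin n → ℝ) (c : Fin n → Fin n → ℝ)
    (cds : Fin n → Fin n → Fin n → ℝ) (r : Fin n → ℝ) (i : Fin n) : ℝ :=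
  e i + ∑ j : Fin n, r j * liab c cds r j i

/-- `r` is a clearing recovery-rate vector. -/
def IsClearing {n : ℕ} (e : Fin n → ℝ) (c : Fin n → Fin n → ℝ)
    (cds : Fin n → Fin n → Fin n → ℝ) (r : Fin n → ℝ) : Prop :=
  (∀ i, 0 ≤ r i ∧ r i ≤ 1) ∧
  ∀ i, (0 < totLiab c cds r i →
          r i = min 1 (assets e c cds r i / totLiab c cds r i)) ∧
       (totLiab c cds r i = 0 → r i = 1)

/-- `(e, c, cds)` is a financial system. -/
def IsFinSys {n : ℕ} (e : Fin n → ℝ) (c : Fin n → Fin n → ℝ)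
    (cds : Fin n → Fin n → Fin n → ℝ) : Prop :=
  (∀ i, 0 ≤ e i) ∧ (∀ i j, 0 ≤ c i j) ∧ (∀ i, c i i = 0) ∧
  (∀ i j R, 0 ≤ cds i j R) ∧
  (∀ i j R, ¬(i ≠ j ∧ i ≠ R ∧ j ≠ R) → cds i j R = 0)

/-- External assets of the 6-bank example (banks 1..6 are indices 0..5):
banks 1 and 4 hold 1. -/
noncomputable def eW : Fin 6 → ℝ := fun i => if i = 0 ∨ i = 3 then 1 else 0

/-- Debt contracts of the 6-bank example: 2→3 of notional 1/2 and 5→6 of notional 4ε. -/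
noncomputable def cW (ε : ℝ) : Fin 6 → Fin 6 → ℝ := fun i j =>
  if i = 1 ∧ j = 2 then 1/2 else if i = 4 ∧ j = 5 then 4 * ε else 0

/-- CDSes of the 6-bank example: (debtor 1, creditor 2, reference 5) and
(debtor 4, creditor 5, reference 2), each of notional 1. -/
noncomputable def cdsW : Fin 6 → Fin 6 → Fin 6 → ℝ := fun i j R =>
  if (i = 0 ∧ j = 1 ∧ R = 4) ∨ (i = 3 ∧ j = 4 ∧ R = 1) then 1 else 0

open Classical in
/-- The clearing map of the 6-bank example. -/
noncomputable def FW (ε : ℝ) (x : Fin 6 → ℝ) (i : Fin 6) : ℝ :=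
  if 0 < totLiab (cW ε) cdsW x i
  then min 1 (assets eW (cW ε) cdsW x i / totLiab (cW ε) cdsW x i)
  else 1

open Classical in
noncomputable def clearingMap {n : ℕ} (e : Fin n → ℝ) (c : Fin n → Fin n → ℝ)
    (cds : Fin n → Fin n → Fin n → ℝ) (x : Fin n → ℝ) (i : Fin n) : ℝ :=
  if 0 < totLiab c cds x i then min 1 (assets e c cds x i / totLiab c cds x i) else 1

section ClearingMap

variable {n : ℕ} {e : Fin n → ℝ} {c : Fin n → Fin n → ℝ} {cds : Fin n → Fin n → Fin n → ℝ}
  {x : Fin n → ℝ} {i : Fin n}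

theorem clearingMap_of_pos (h : 0 < totLiab c cds x i) :
    clearingMap e c cds x i = min 1 (assets e c cds x i / totLiab c cds x i) :=
  if_pos h

theorem clearingMap_eq_one_of_le (h : totLiab c cds x i ≤ assets e c cds x i) :
    clearingMap e c cds x i = 1 := by
  unfold clearingMap
  split_ifs with hpos
  · exact min_eq_left ((one_le_div hpos).2 h)
  · rfl

theorem isClearing_of_clearingMap_eq (hx : ∀ i, 0 ≤ x i ∧ x i ≤ 1)
    (hfix : clearingMap e c cds x = x) : IsClearing e c cds x := by
  refine ⟨hx, fun i => ⟨fun hpos => ?_, fun hzero => ?_⟩⟩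
  · rw [← clearingMap_of_pos hpos, hfix]
  · rw [← congrFun hfix i, clearingMap, if_neg hzero.not_gt]

end ClearingMap

theorem FW_eq_clearingMap (ε : ℝ) : FW ε = clearingMap eW (cW ε) cdsW := rfl

theorem totLiab_W (ε : ℝ) (x : Fin 6 → ℝ) :
    totLiab (cW ε) cdsW x = ![1 - x 4, 1 / 2, 0, 1 - x 1, 4 * ε, 0] := by
  funext i
  fin_cases i <;> simp [totLiab, liab, cW, cdsW, Fin.sum_univ_six]

theorem assets_W (ε : ℝ) (x : Fin 6 → ℝ) :
    assets eW (cW ε) cdsW x =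
      ![1, x 0 * (1 - x 4), x 1 * 2⁻¹, 1, x 3 * (1 - x 1), x 4 * (4 * ε)] := by
  funext i
  fin_cases i <;> simp [assets, liab, eW, cW, cdsW, Fin.sum_univ_six]

theorem FW_apply {ε : ℝ} (hε : 0 < ε) {x : Fin 6 → ℝ} (hx₁ : 0 ≤ x 1) (hx₄ : 0 ≤ x 4) :
    FW ε x =
      ![1, min 1 (x 0 * (1 - x 4) / 2⁻¹), 1, 1, min 1 (x 3 * (1 - x 1) / (4 * ε)), 1] := by
  funext i
  rw [FW_eq_clearingMap]
  fin_cases i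
  · exact clearingMap_eq_one_of_le (by simp [totLiab_W, assets_W, hx₄])
  · simp [clearingMap_of_pos, totLiab_W, assets_W]
  · exact clearingMap_eq_one_of_le (by simp [totLiab_W, assets_W, hx₁])
  · exact clearingMap_eq_one_of_le (by simp [totLiab_W, assets_W, hx₁])
  · simp [clearingMap_of_pos, totLiab_W, assets_W, hε]
  · exact clearingMap_eq_one_of_le (by simp [totLiab_W, assets_W]; positivity)

theorem FW_clearing_vector {ε : ℝ} (hε : 0 < ε) :
    FW ε ![1, 1, 1, 1, 0, 1] = ![1, 1, 1, 1, 0, 1] := by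
  rw [FW_apply hε (by simp) (by simp)]
  simp

theorem FW_approx_vector {ε : ℝ} (hε : 0 < ε) (hε' : ε ≤ 1 / 2) :
    FW ε ![1, 1 - 2 * ε, 1, 1, 1 / 2 + ε, 1] = ![1, 1 - 2 * ε, 1, 1, 1 / 2, 1] := by
  rw [FW_apply hε (by simp; linarith) (by simp; positivity)]
  simp only [Matrix.cons_val]
  have h₁ : 1 * (1 - (1 / 2 + ε)) / 2⁻¹ = 1 - 2 * ε := by ring
  have h₄ : 1 * (1 - (1 - 2 * ε)) / (4 * ε) = 1 / 2 := by field_simp; ring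
  rw [h₁, h₄, min_eq_right (by linarith), min_eq_right (by norm_num)]

/-- In the 6-bank example with `0 < ε ≤ 1/4`:  `r = (1,1,1,1,0,1)` is a clearing vector
(a fixed point of the clearing map `FW ε`), while `r' = (1, 1-2ε, 1, 1, 1/2+ε, 1)` is a
weak ε-approximate fixed point of `FW ε` whose ℓ∞-distance to `r` equals `1/2 + ε > 1/2`. -/
theorem weak_approx_far_from_fixed_point (ε : ℝ) (hε : 0 < ε) (hε' : ε ≤ 1/4) :
    IsClearing eW (cW ε) cdsW ![1, 1, 1, 1, 0, 1] ∧
    FW ε ![1, 1, 1, 1, 0, 1] = ![1, 1, 1, 1, 0, 1] ∧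
    (∀ i, |FW ε ![1, 1 - 2*ε, 1, 1, 1/2 + ε, 1] i -
            (![1, 1 - 2*ε, 1, 1, 1/2 + ε, 1] : Fin 6 → ℝ) i| ≤ ε) ∧
    (∀ i, |(![1, 1 - 2*ε, 1, 1, 1/2 + ε, 1] : Fin 6 → ℝ) i -
            (![1, 1, 1, 1, 0, 1] : Fin 6 → ℝ) i| ≤ 1/2 + ε) ∧
    (∃ i, |(![1, 1 - 2*ε, 1, 1, 1/2 + ε, 1] : Fin 6 → ℝ) i -
            (![1, 1, 1, 1, 0, 1] : Fin 6 → ℝ) i| = 1/2 + ε) ∧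
    (1/2 : ℝ) < 1/2 + ε := by
  have hfix := FW_clearing_vector hε
  have hdist : |(1 / 2 + ε) - 0| = 1 / 2 + ε := by rw [sub_zero, abs_of_pos (by positivity)]
  refine ⟨isClearing_of_clearingMap_eq (fun i => by fin_cases i <;> norm_num) hfix, hfix,
    fun i => ?_, fun i => ?_, ⟨4, hdist⟩, by linarith⟩
  · rw [FW_approx_vector hε (by linarith)]
    fin_cases i <;> simp [abs_of_pos hε, hε.le]
  · fin_cases i <;> simp [abs_of_pos hε, abs_le] <;> linarith
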